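/- Let n = 3k with k odd, F the finite field with 2^n elements, i a positive integer with gcd(i,n) = 1, and f : F → F the Gold function f(x) = x^(2^i+1). Let ξ ∈ F satisfy ξ^8 = ξ and let μ ∈ F, μ ≠ 0. Set Z = { ( x , μ^(−(2^i+1)) · ( ξ·Tr(μx) + Tr(ξ^(2^i)·μx) ) ) : x ∈ F } and Z_{0b} = {0} × F. Then Z is a WZ space of f and Z_{0b} ∩ Z = {(0,0)}. -/

import Mathlib

noncomputable instance (n : ℕ) : Fintype (GaloisField 2 n) := Fintype.ofFinite _

/-- The absolute trace from `GF(2^n)` to `𝔽₂`. -/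
noncomputable def Tr (n : ℕ) : GaloisField 2 n → ZMod 2 :=
  Algebra.trace (ZMod 2) (GaloisField 2 n)

/-- The Walsh transform of `f : GF(2^n) → GF(2^n)` at `(a, b)`. -/
noncomputable def W (n : ℕ) (f : GaloisField 2 n → GaloisField 2 n)
    (a b : GaloisField 2 n) : ℤ :=
  ∑ x : GaloisField 2 n, (-1) ^ (Tr n (a * x + b * f x)).val

/-- A WZ space of `f`: an `𝔽₂`-subspace of `GF(2^n) × GF(2^n)` of dimension `n`
all of whose nonzero elements are Walsh zeros of `f`. -/
def IsWZSpace (n : ℕ) (f : GaloisField 2 n → GaloisField 2 n)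
    (S : Submodule (ZMod 2) (GaloisField 2 n × GaloisField 2 n)) : Prop :=
  Module.finrank (ZMod 2) S = n ∧
    ∀ p ∈ S, p ≠ (0 : GaloisField 2 n × GaloisField 2 n) → W n f p.1 p.2 = 0

section Helpers

lemma Tr_add (n : ℕ) (a b : GaloisField 2 n) : Tr n (a + b) = Tr n a + Tr n b :=
  map_add (Algebra.trace (ZMod 2) (GaloisField 2 n)) a b

lemma Tr_algMul (n : ℕ) (t : ZMod 2) (z : GaloisField 2 n) :
    Tr n (algebraMap (ZMod 2) (GaloisField 2 n) t * z) = t * Tr n z := by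
  rw [← Algebra.smul_def]
  show Algebra.trace _ _ _ = _
  rw [map_smul, smul_eq_mul]; rfl

noncomputable def frobAlg (n : ℕ) : GaloisField 2 n ≃ₐ[ZMod 2] GaloisField 2 n :=
  AlgEquiv.ofRingEquiv (f := frobeniusEquiv (GaloisField 2 n) 2) (fun r => by
    show frobeniusEquiv (GaloisField 2 n) 2 _ = _
    rw [coe_frobeniusEquiv, frobenius_def, ← map_pow, ZMod.pow_card r])

lemma Tr_sq (n : ℕ) (z : GaloisField 2 n) : Tr n (z ^ 2) = Tr n z := by
  have h : z ^ 2 = frobAlg n z := by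
    have h2 : frobAlg n z = frobeniusEquiv (GaloisField 2 n) 2 z := rfl
    rw [h2, coe_frobeniusEquiv, frobenius_def]
  show Algebra.trace _ _ (z ^ 2) = Algebra.trace _ _ z
  rw [h, Algebra.trace_eq_of_algEquiv]

lemma Tr_pow2 (n : ℕ) (j : ℕ) (z : GaloisField 2 n) : Tr n (z ^ 2 ^ j) = Tr n z := by
  induction j with
  | zero => simp
  | succ m ih => rw [pow_succ, pow_mul, Tr_sq, ih]

lemma Tr_one (n : ℕ) (hn : n ≠ 0) (hodd : n % 2 = 1) : Tr n 1 = 1 := by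
  have h1 : (1 : GaloisField 2 n) = algebraMap (ZMod 2) _ 1 := by simp
  rw [Tr, h1, Algebra.trace_algebraMap, GaloisField.finrank 2 hn]
  rw [nsmul_eq_mul, mul_one, ← ZMod.natCast_mod, hodd]
  rfl

lemma exists_Tr_one (n : ℕ) {a : GaloisField 2 n} (ha : a ≠ 0) :
    ∃ y, Tr n (a * y) = 1 := by
  have h := traceForm_nondegenerate (ZMod 2) (GaloisField 2 n)
  by_contra hc
  push_neg at hc
  refine ha (h.1 a fun y => ?_)
  have h2 := hc y
  rw [Algebra.traceForm_apply]
  revert h2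
  show Tr n (a * y) ≠ 1 → Tr n (a * y) = 0
  generalize Tr n (a * y) = t
  revert t; decide

lemma balance {F : Type*} [Fintype F] [AddCommGroup F] (g : F → ZMod 2) (y : F)
    (h : ∀ x, g (x + y) = g x + 1) :
    ∑ x : F, ((-1:ℤ))^(g x).val = 0 := by
  have key : ∀ a : ZMod 2, ((-1:ℤ))^((a+1).val) = -(-1)^a.val := by decide
  have h2 : ∑ x : F, ((-1:ℤ))^(g x).val = ∑ x : F, ((-1:ℤ))^(g (x + y)).val :=
    (Fintype.sum_equiv (Equiv.addRight y) _ _ (fun x => rfl)).symm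
  simp_rw [h, key, Finset.sum_neg_distrib] at h2
  linarith

lemma pow_pow_fix {R : Type*} [Monoid R] (a : R) (q : ℕ) (h : a ^ q = a) (m : ℕ) :
    a ^ (q ^ m) = a := by
  induction m with
  | zero => simpa using pow_one a
  | succ m ih => rw [pow_succ, pow_mul, ih, h]

lemma seven_dvd (i : ℕ) (h3 : ¬ (3 ∣ i)) : 7 ∣ 2^i * 2^i + 2^i + 1 := by
  have hr : i % 3 = 1 ∨ i % 3 = 2 := by omega
  have h1 : 2^i % 7 = 2^(i % 3) % 7 := by
    conv_lhs => rw [← Nat.div_add_mod i 3]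
    rw [pow_add, pow_mul, Nat.mul_mod, Nat.pow_mod]
    norm_num
  have h2 : (2^i * 2^i) % 7 = (2^(i%3) % 7) * (2^(i%3) % 7) % 7 := by
    rw [Nat.mul_mod, h1]
  rcases hr with hr | hr <;> rw [hr] at h1 h2 <;> norm_num at h1 h2 <;> omega

end Helpers

/-- For `n = 3k` with `k` odd, `gcd(i,n) = 1`, `ξ ∈ F_{2^3}` (i.e. `ξ^8 = ξ`) and
`μ ≠ 0`, the set `Z = {(x, μ^(−(2^i+1))·(ξ·Tr(μx) + Tr(ξ^(2^i)·μx))) : x ∈ F}` is a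
WZ space of the Gold function `f(x) = x^(2^i+1)`, and the pair `{Z_{0b}, Z}` with
`Z_{0b} = {0} × F` intersects trivially. -/
theorem stmt14 (n i k : ℕ) (hk : Odd k) (hn : n = 3 * k) (hi : 0 < i)
    (hgcd : Nat.gcd i n = 1)
    (f : GaloisField 2 n → GaloisField 2 n) (hf : ∀ x, f x = x ^ (2 ^ i + 1))
    (ξ μ : GaloisField 2 n) (hξ : ξ ^ 8 = ξ) (hμ : μ ≠ 0) :
    ∃ Z : Submodule (ZMod 2) (GaloisField 2 n × GaloisField 2 n),
      (Z : Set (GaloisField 2 n × GaloisField 2 n)) =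
        Set.range (fun x : GaloisField 2 n =>
          (x, (μ ^ (2 ^ i + 1))⁻¹ *
            (ξ * algebraMap (ZMod 2) (GaloisField 2 n) (Tr n (μ * x)) +
              algebraMap (ZMod 2) (GaloisField 2 n) (Tr n (ξ ^ (2 ^ i) * μ * x))))) ∧
      IsWZSpace n f Z ∧
      (({0} ×ˢ (Set.univ : Set (GaloisField 2 n))) ∩
          (Z : Set (GaloisField 2 n × GaloisField 2 n)) =
        {((0 : GaloisField 2 n), (0 : GaloisField 2 n))}) := by
  classical
  obtain ⟨m, hm⟩ := hk
  have hn0 : n ≠ 0 := by omega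
  have hnodd : n % 2 = 1 := by omega
  have h3i : ¬ (3 ∣ i) := by
    intro h
    have h3n : (3:ℕ) ∣ n := ⟨k, hn⟩
    have hd := Nat.dvd_gcd h h3n
    rw [hgcd] at hd
    omega
  have hM : μ ^ (2^i + 1) ≠ 0 := pow_ne_zero _ hμ
  have hz2 : ∀ t : ZMod 2, t ^ (2:ℕ) = t := by decide
  have hzpow : ∀ t : ZMod 2, t ^ (2^i:ℕ) = t := fun t => pow_pow_fix t 2 (hz2 t) i
  have hz8 : ∀ t : ZMod 2, t ^ (8:ℕ) = t := by decide
  let φ : GaloisField 2 n →ₗ[ZMod 2] GaloisField 2 n :=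
    { toFun := fun x => (μ ^ (2 ^ i + 1))⁻¹ *
        (ξ * algebraMap (ZMod 2) (GaloisField 2 n) (Tr n (μ * x)) +
          algebraMap (ZMod 2) (GaloisField 2 n) (Tr n (ξ ^ (2 ^ i) * μ * x)))
      map_add' := fun x y => by
        simp only [mul_add, Tr_add, map_add]
        ring
      map_smul' := fun t x => by
        simp only [RingHom.id_apply]
        have h1 : μ * (t • x) = algebraMap (ZMod 2) (GaloisField 2 n) t * (μ * x) := by
          rw [Algebra.smul_def]; ring
        have h2 : ξ ^ (2^i) * μ * (t • x)
            = algebraMap (ZMod 2) (GaloisField 2 n) t * (ξ ^ (2^i) * μ * x) := by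
          rw [Algebra.smul_def]; ring
        rw [h1, h2, Tr_algMul, Tr_algMul, map_mul, map_mul, Algebra.smul_def]
        ring }
  let ψ := (LinearMap.id : GaloisField 2 n →ₗ[ZMod 2] GaloisField 2 n).prod φ
  have hψ : ∀ x, ψ x = (x, φ x) := fun x => rfl
  refine ⟨LinearMap.range ψ, ?_, ⟨?_, ?_⟩, ?_⟩
  · rw [LinearMap.coe_range]
    rfl
  · have hinj : Function.Injective ψ := by
      intro a b hab
      have := congrArg Prod.fst hab
      simpa [hψ] using this
    rw [LinearMap.finrank_range_of_inj hinj, GaloisField.finrank 2 hn0]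
  · intro p hp hne
    rw [LinearMap.mem_range] at hp
    obtain ⟨x₀, hx₀⟩ := hp
    have hp1 : p.1 = x₀ := by rw [← hx₀, hψ]
    have hp2 : p.2 = φ x₀ := by rw [← hx₀, hψ]
    have hx₀ne : x₀ ≠ 0 := fun h0 => hne (by rw [← hx₀, h0, map_zero])
    set t1 := Tr n (μ * x₀) with ht1
    set t2 := Tr n (ξ ^ (2^i) * μ * x₀) with ht2
    set β := ξ * algebraMap (ZMod 2) (GaloisField 2 n) t1
        + algebraMap (ZMod 2) (GaloisField 2 n) t2 with hβdef
    have hp2' : p.2 = (μ ^ (2^i+1))⁻¹ * β := hp2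
    rw [hp1, hp2']
    unfold W
    simp only [hf]
    by_cases hβ : β = 0
    · obtain ⟨y₀, hy₀⟩ := exists_Tr_one n hx₀ne
      refine balance (fun z => Tr n (x₀ * z + (μ ^ (2^i+1))⁻¹ * β * z ^ (2^i+1))) y₀
        (fun x => ?_)
      show Tr n (x₀ * (x + y₀) + (μ ^ (2^i+1))⁻¹ * β * (x + y₀) ^ (2^i+1))
          = Tr n (x₀ * x + (μ ^ (2^i+1))⁻¹ * β * x ^ (2^i+1)) + 1
      simp only [hβ, mul_zero, zero_mul, add_zero]
      rw [mul_add, Tr_add, hy₀]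
    · have hβ8 : β ^ (8:ℕ) = β := by
        rw [hβdef, show (8:ℕ) = 2^3 by norm_num, add_pow_char_pow, mul_pow,
          ← map_pow, ← map_pow]
        rw [show ((2:ℕ)^3) = 8 by norm_num, hξ, hz8, hz8]
      have hβ7 : β ^ (7:ℕ) = 1 := by
        have h := hβ8
        rw [show (8:ℕ) = 7 + 1 by norm_num, pow_succ] at h
        exact mul_right_cancel₀ hβ (h.trans (one_mul β).symm)
      have hβ3i : β ^ (2^i*(2^i*2^i)) = β := by
        have hexp : (8:ℕ)^i = 2^i*(2^i*2^i) := by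
          rw [show (8:ℕ) = 2^3 by norm_num, ← pow_mul, ← pow_add, ← pow_add]
          congr 1
          omega
        rw [← hexp]
        exact pow_pow_fix β 8 hβ8 i
      set b := (μ ^ (2^i+1))⁻¹ * β with hbdef
      set y₀ := μ * β ^ (2^i:ℕ) with hy₀def
      have hkey : b * y₀ = (b * y₀ ^ (2^i:ℕ)) ^ (2^i:ℕ) := by
        rw [hbdef, hy₀def]
        have expand : ((μ^(2^i+1))⁻¹ * β * (μ * β^(2^i:ℕ))^(2^i:ℕ))^(2^i:ℕ)
            = ((μ^(2^i+1))^(2^i:ℕ))⁻¹ * β^(2^i:ℕ)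
              * (μ^(2^i*2^i:ℕ) * β^(2^i*(2^i*2^i):ℕ)) := by
          rw [mul_pow, mul_pow, mul_pow, inv_pow, ← pow_mul, ← pow_mul]
          ring
        rw [expand, hβ3i]
        field_simp
        ring
      have hTb : Tr n (b * y₀ ^ (2^i+1)) = 1 := by
        have hval : b * y₀ ^ (2^i+1) = β ^ (2^i*2^i + 2^i + 1) := by
          rw [hbdef, hy₀def, mul_pow, ← pow_mul]
          field_simp
          ring
        rw [hval]
        obtain ⟨m7, hm7⟩ := seven_dvd i h3i
        rw [hm7, pow_mul, hβ7, one_pow]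
        exact Tr_one n hn0 hnodd
      have hTxy : Tr n (x₀ * y₀) = 0 := by
        have hβpow : β ^ (2^i:ℕ)
            = ξ ^ (2^i) * algebraMap (ZMod 2) (GaloisField 2 n) t1
              + algebraMap (ZMod 2) (GaloisField 2 n) t2 := by
          rw [hβdef, add_pow_char_pow, mul_pow, ← map_pow, ← map_pow, hzpow, hzpow]
        have hrw : x₀ * y₀
            = algebraMap (ZMod 2) (GaloisField 2 n) t1 * (ξ^(2^i) * μ * x₀)
              + algebraMap (ZMod 2) (GaloisField 2 n) t2 * (μ * x₀) := by
          rw [hy₀def, hβpow]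
          ring
        rw [hrw, Tr_add, Tr_algMul, Tr_algMul, ← ht1, ← ht2]
        have h0 : ∀ u v : ZMod 2, u * v + v * u = 0 := by decide
        exact h0 t1 t2
      have hcrossEq : ∀ x : GaloisField 2 n,
          Tr n (b * (x ^ (2^i:ℕ) * y₀)) = Tr n (b * (y₀ ^ (2^i:ℕ) * x)) := fun x => by
        have h1 : b * (x ^ (2^i:ℕ) * y₀) = (b * (y₀ ^ (2^i:ℕ) * x)) ^ (2^i:ℕ) := by
          calc b * (x ^ (2^i:ℕ) * y₀) = (b * y₀) * x ^ (2^i:ℕ) := by ring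
          _ = (b * y₀ ^ (2^i:ℕ)) ^ (2^i:ℕ) * x ^ (2^i:ℕ) := by rw [← hkey]
          _ = (b * (y₀ ^ (2^i:ℕ) * x)) ^ (2^i:ℕ) := by rw [← mul_pow, mul_assoc]
        rw [h1, Tr_pow2]
      refine balance (fun z => Tr n (x₀ * z + b * z ^ (2^i+1))) y₀ (fun x => ?_)
      show Tr n (x₀ * (x + y₀) + b * (x + y₀) ^ (2^i+1))
          = Tr n (x₀ * x + b * x ^ (2^i+1)) + 1
      have hfrob : (x + y₀) ^ (2^i:ℕ) = x ^ (2^i:ℕ) + y₀ ^ (2^i:ℕ) :=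
        add_pow_char_pow x y₀ 2 i
      have hexpand : x₀ * (x + y₀) + b * (x + y₀) ^ (2^i+1)
          = (x₀ * x + b * x ^ (2^i+1)) + (x₀ * y₀ + (b * y₀ ^ (2^i+1)
            + (b * (x ^ (2^i:ℕ) * y₀) + b * (y₀ ^ (2^i:ℕ) * x)))) := by
        rw [pow_succ (x + y₀) (2^i), hfrob, pow_succ x (2^i), pow_succ y₀ (2^i)]
        ring
      rw [hexpand, Tr_add]
      congr 1
      rw [Tr_add, Tr_add, Tr_add, hTxy, hTb, hcrossEq x]
      have hTT : ∀ u : ZMod 2, u + u = 0 := by decide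
      rw [hTT]
      norm_num
  · ext q
    simp only [Set.mem_inter_iff, Set.mem_prod, Set.mem_singleton_iff, Set.mem_univ,
      and_true, SetLike.mem_coe, LinearMap.mem_range]
    constructor
    · rintro ⟨hq1, x, hx⟩
      have h1 : q.1 = x := by rw [← hx]; rfl
      have h2 : q.2 = φ x := by rw [← hx]; rfl
      have hx0 : x = 0 := by rw [← h1]; exact hq1
      have : q.2 = 0 := by rw [h2, hx0, map_zero]
      exact Prod.ext (by rw [h1, hx0]) this
    · rintro rfl
      exact ⟨rfl, 0, by rw [map_zero]; rfl⟩
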